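/- Let ε > 0 and define σ_ε : ℝ → ℝ by σ_ε(u) = exp(−(2/√u)·arctan(ε/√u)) for u > 0 and σ_ε(u) = 0 for u ≤ 0. Then σ_ε is C^∞ (infinitely differentiable) on all of ℝ. -/

import Mathlib

/-! On `u > 0` put `x = 1/√u`, `y = 1/(u + ε²)` and `z = arctan (ε/√u)`. Then `x' = -x³/2`,
`y' = -y²`, `z' = -ε x y / 2` and `σ' = (x³ z + ε x² y) σ`, so the span of the functions
`x^i y^j z^k σ` (all extended by zero) is closed under differentiation on `u > 0`. Each of them
tends to `0` as `u → 0⁺`, because `y` and `z` stay bounded while `σ ≤ exp (-x)` once `z > 1/2`.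
Since `x² = 1/u`, their difference quotients at `0` are again of this form, so they have
derivative `0` there, the span is closed under differentiation on all of `ℝ`, and its elements
are `C^∞`. -/

open Real Filter Set Topology
open scoped ContDiff

section IteratedDerivatives

variable {𝕜 : Type*} [NontriviallyNormedField 𝕜] {F : Type*} [NormedAddCommGroup F]
  [NormedSpace 𝕜 F]

theorem contDiff_infty_of_forall_hasDerivAt_mem {A : Set (𝕜 → F)}
    (hA : ∀ f ∈ A, ∃ f' ∈ A, ∀ x, HasDerivAt f (f' x) x) {f : 𝕜 → F} (hf : f ∈ A) :
    ContDiff 𝕜 ∞ f := by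
  have hderiv : ∀ g ∈ A, Differentiable 𝕜 g ∧ deriv g ∈ A := fun g hg => by
    obtain ⟨g', hg', hg'_deriv⟩ := hA g hg
    refine ⟨fun x => (hg'_deriv x).differentiableAt, ?_⟩
    rwa [show deriv g = g' from funext fun x => (hg'_deriv x).deriv]
  have hiter : ∀ m : ℕ, iteratedDeriv m f ∈ A := by
    intro m
    induction m with
    | zero => rwa [iteratedDeriv_zero]
    | succ m ih => rw [iteratedDeriv_succ]; exact (hderiv _ ih).2
  exact contDiff_of_differentiable_iteratedDeriv fun m _ => (hderiv _ (hiter m)).1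

theorem exists_hasDerivAt_mem_span {s : Set (𝕜 → F)}
    (hs : ∀ f ∈ s, ∃ f' ∈ Submodule.span 𝕜 s, ∀ x, HasDerivAt f (f' x) x) :
    ∀ f ∈ Submodule.span 𝕜 s, ∃ f' ∈ Submodule.span 𝕜 s, ∀ x, HasDerivAt f (f' x) x := by
  intro f hf
  induction hf using Submodule.span_induction with
  | mem f hf => exact hs f hf
  | zero => exact ⟨0, zero_mem _, fun x => hasDerivAt_const x 0⟩
  | add f g _ _ hf hg =>
    obtain ⟨f', hf'_mem, hf'⟩ := hf
    obtain ⟨g', hg'_mem, hg'⟩ := hg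
    exact ⟨f' + g', add_mem hf'_mem hg'_mem, fun x => (hf' x).add (hg' x)⟩
  | smul c f _ hf =>
    obtain ⟨f', hf'_mem, hf'⟩ := hf
    exact ⟨c • f', Submodule.smul_mem _ c hf'_mem, fun x => (hf' x).const_smul c⟩

end IteratedDerivatives

theorem hasDerivAt_of_eq_zero_of_nonpos {f f' : ℝ → ℝ} (hf : ∀ u ≤ 0, f u = 0)
    (hf' : ∀ u ≤ 0, f' u = 0) (hpos : ∀ u, 0 < u → HasDerivAt f (f' u) u)
    (hslope : Tendsto (fun u => f u / u) (𝓝[>] 0) (𝓝 0)) (u : ℝ) :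
    HasDerivAt f (f' u) u := by
  rcases lt_trichotomy u 0 with hu | rfl | hu
  · rw [hf' u hu.le]
    refine (hasDerivAt_const u 0).congr_of_eventuallyEq ?_
    filter_upwards [gt_mem_nhds hu] with v hv using hf v hv.le
  · have hslope_eq : slope f 0 = fun u => f u / u := by
      ext u; rw [slope_def_field, hf 0 le_rfl, sub_zero, sub_zero]
    rw [hf' 0 le_rfl, hasDerivAt_iff_tendsto_slope, hslope_eq, ← nhdsLT_sup_nhdsGT, tendsto_sup]
    refine ⟨tendsto_const_nhds.congr' ?_, hslope⟩
    filter_upwards [self_mem_nhdsWithin] with v (hv : v < 0)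
    rw [hf v hv.le, zero_div]
  · exact hpos u hu

noncomputable def sigmaEps (ε u : ℝ) : ℝ :=
  if 0 < u then exp (-(2 / √u * arctan (ε / √u))) else 0

noncomputable def sigmaMonomial (ε : ℝ) (i j k : ℕ) (u : ℝ) : ℝ :=
  (√u)⁻¹ ^ i * (u + ε ^ 2)⁻¹ ^ j * arctan (ε / √u) ^ k * sigmaEps ε u

def sigmaMonomials (ε : ℝ) : Set (ℝ → ℝ) := {f | ∃ i j k, f = sigmaMonomial ε i j k}

theorem sigmaEps_of_nonpos (ε : ℝ) {u : ℝ} (hu : u ≤ 0) : sigmaEps ε u = 0 :=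
  if_neg hu.not_gt

theorem sigmaMonomial_of_nonpos (ε : ℝ) (i j k : ℕ) {u : ℝ} (hu : u ≤ 0) :
    sigmaMonomial ε i j k u = 0 := by
  rw [sigmaMonomial, sigmaEps_of_nonpos ε hu, mul_zero]

theorem hasDerivAt_inv_sqrt {u : ℝ} (hu : 0 < u) :
    HasDerivAt (fun v => (√v)⁻¹) (-(√u)⁻¹ ^ 3 / 2) u := by
  have hs : √u ≠ 0 := (sqrt_pos.2 hu).ne'
  refine ((hasDerivAt_sqrt hu.ne').inv hs).congr_deriv ?_
  field_simp

theorem hasDerivAt_inv_sqrt_pow (i : ℕ) {u : ℝ} (hu : 0 < u) :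
    HasDerivAt (fun v => (√v)⁻¹ ^ i) (-(i / 2) * (√u)⁻¹ ^ (i + 2)) u := by
  refine ((hasDerivAt_inv_sqrt hu).fun_pow i).congr_deriv ?_
  rcases i with _ | i
  · simp
  · push_cast; ring

theorem hasDerivAt_inv_add_sq_pow (ε : ℝ) (j : ℕ) {u : ℝ} (hu : u + ε ^ 2 ≠ 0) :
    HasDerivAt (fun v => (v + ε ^ 2)⁻¹ ^ j) (-j * (u + ε ^ 2)⁻¹ ^ (j + 1)) u := by
  refine (((hasDerivAt_id u).add_const (ε ^ 2)).inv hu |>.fun_pow j).congr_deriv ?_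
  rcases j with _ | j
  · simp
  · simp only [id, Pi.inv_apply]
    generalize u + ε ^ 2 = w
    push_cast
    ring

theorem hasDerivAt_arctan_div_sqrt (ε : ℝ) {u : ℝ} (hu : 0 < u) :
    HasDerivAt (fun v => arctan (ε / √v)) (-(ε / 2) * (√u)⁻¹ * (u + ε ^ 2)⁻¹) u := by
  simp only [div_eq_mul_inv ε]
  refine ((hasDerivAt_inv_sqrt hu).const_mul ε).arctan.congr_deriv ?_
  obtain ⟨s, hs, rfl⟩ : ∃ s, 0 < s ∧ s ^ 2 = u := ⟨√u, sqrt_pos.2 hu, sq_sqrt hu.le⟩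
  rw [sqrt_sq hs.le]
  field_simp

theorem hasDerivAt_sigmaEps (ε : ℝ) {u : ℝ} (hu : 0 < u) :
    HasDerivAt (sigmaEps ε)
      (((√u)⁻¹ ^ 3 * arctan (ε / √u) + ε * (√u)⁻¹ ^ 2 * (u + ε ^ 2)⁻¹) * sigmaEps ε u) u := by
  have hexp := ((((hasDerivAt_inv_sqrt hu).const_mul 2).fun_mul
    (hasDerivAt_arctan_div_sqrt ε hu)).fun_neg).exp
  have heq : sigmaEps ε =ᶠ[𝓝 u] fun v => exp (-(2 * (√v)⁻¹ * arctan (ε / √v))) := by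
    filter_upwards [lt_mem_nhds hu] with v hv
    rw [sigmaEps, if_pos hv, div_eq_mul_inv 2]
  refine (hexp.congr_of_eventuallyEq heq).congr_deriv ?_
  rw [sigmaEps, if_pos hu, div_eq_mul_inv 2]
  ring

noncomputable def sigmaMonomialDeriv (ε : ℝ) (i j k : ℕ) : ℝ → ℝ :=
  (-(i / 2 : ℝ)) • sigmaMonomial ε (i + 2) j k - (j : ℝ) • sigmaMonomial ε i (j + 1) k
    - (ε * k / 2) • sigmaMonomial ε (i + 1) (j + 1) (k - 1)
    + sigmaMonomial ε (i + 3) j (k + 1) + ε • sigmaMonomial ε (i + 2) (j + 1) k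

theorem hasDerivAt_sigmaMonomial_of_pos (ε : ℝ) (i j k : ℕ) {u : ℝ} (hu : 0 < u) :
    HasDerivAt (sigmaMonomial ε i j k) (sigmaMonomialDeriv ε i j k u) u := by
  have h := (((hasDerivAt_inv_sqrt_pow i hu).fun_mul
    (hasDerivAt_inv_add_sq_pow ε j (by positivity : u + ε ^ 2 ≠ 0))).fun_mul
    ((hasDerivAt_arctan_div_sqrt ε hu).fun_pow k)).fun_mul (hasDerivAt_sigmaEps ε hu)
  refine h.congr_deriv ?_
  simp only [sigmaMonomialDeriv, sigmaMonomial, Pi.add_apply, Pi.sub_apply, Pi.smul_apply,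
    smul_eq_mul]
  ring

theorem sigmaMonomial_div_self (ε : ℝ) (i j k : ℕ) {u : ℝ} (hu : 0 < u) :
    sigmaMonomial ε i j k u / u = sigmaMonomial ε (i + 2) j k u := by
  have hsq : (√u)⁻¹ ^ 2 = u⁻¹ := by rw [inv_pow, sq_sqrt hu.le]
  simp only [sigmaMonomial, pow_add, hsq]
  ring

theorem tendsto_inv_sqrt_nhdsGT_zero : Tendsto (fun u => (√u)⁻¹) (𝓝[>] 0) atTop := by
  refine tendsto_inv_nhdsGT_zero.comp (tendsto_nhdsWithin_iff.2 ⟨?_, ?_⟩)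
  · simpa using (continuous_sqrt.tendsto 0).mono_left nhdsWithin_le_nhds
  · exact eventually_nhdsWithin_of_forall fun u hu => sqrt_pos.2 hu

theorem tendsto_arctan_div_sqrt {ε : ℝ} (hε : 0 < ε) :
    Tendsto (fun u => arctan (ε / √u)) (𝓝[>] 0) (𝓝 (π / 2)) := by
  simp only [div_eq_mul_inv ε]
  exact (tendsto_arctan_atTop.mono_right nhdsWithin_le_nhds).comp
    (tendsto_inv_sqrt_nhdsGT_zero.const_mul_atTop hε)

theorem tendsto_inv_sqrt_pow_mul_sigmaEps {ε : ℝ} (hε : 0 < ε) (i : ℕ) :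
    Tendsto (fun u => (√u)⁻¹ ^ i * sigmaEps ε u) (𝓝[>] 0) (𝓝 0) := by
  have hlim := (tendsto_pow_mul_exp_neg_atTop_nhds_zero i).comp tendsto_inv_sqrt_nhdsGT_zero
  have hz : ∀ᶠ u in 𝓝[>] 0, 1 / 2 < arctan (ε / √u) :=
    (tendsto_arctan_div_sqrt hε).eventually_const_lt (by linarith [pi_gt_three])
  refine squeeze_zero' (eventually_nhdsWithin_of_forall fun u _ => ?_) ?_ hlim
  · unfold sigmaEps; split_ifs <;> positivity
  · filter_upwards [hz, self_mem_nhdsWithin] with u hz (hu : 0 < u)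
    have hx : 0 ≤ (√u)⁻¹ := by positivity
    rw [sigmaEps, if_pos hu, Function.comp_apply, div_eq_mul_inv 2]
    gcongr
    nlinarith

theorem tendsto_sigmaMonomial {ε : ℝ} (hε : 0 < ε) (i j k : ℕ) :
    Tendsto (sigmaMonomial ε i j k) (𝓝[>] 0) (𝓝 0) := by
  have hy : Tendsto (fun u => (u + ε ^ 2)⁻¹ ^ j) (𝓝[>] 0) (𝓝 ((0 + ε ^ 2)⁻¹ ^ j)) :=
    (((tendsto_id.add_const _).inv₀ (by positivity)).pow j).mono_left nhdsWithin_le_nhds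
  have h := (tendsto_inv_sqrt_pow_mul_sigmaEps hε i).mul
    (hy.mul ((tendsto_arctan_div_sqrt hε).pow k))
  rw [zero_mul] at h
  refine h.congr fun u => ?_
  simp only [sigmaMonomial]
  ring

theorem hasDerivAt_sigmaMonomial {ε : ℝ} (hε : 0 < ε) (i j k : ℕ) (u : ℝ) :
    HasDerivAt (sigmaMonomial ε i j k) (sigmaMonomialDeriv ε i j k u) u := by
  refine hasDerivAt_of_eq_zero_of_nonpos (fun v hv => sigmaMonomial_of_nonpos ε i j k hv)
    (fun v hv => ?_) (fun v hv => hasDerivAt_sigmaMonomial_of_pos ε i j k hv) ?_ u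
  · simp [sigmaMonomialDeriv, sigmaMonomial_of_nonpos ε _ _ _ hv]
  · refine (tendsto_sigmaMonomial hε (i + 2) j k).congr' ?_
    filter_upwards [self_mem_nhdsWithin] with v (hv : 0 < v)
    exact (sigmaMonomial_div_self ε i j k hv).symm

theorem sigmaMonomialDeriv_mem_span (ε : ℝ) (i j k : ℕ) :
    sigmaMonomialDeriv ε i j k ∈ Submodule.span ℝ (sigmaMonomials ε) := by
  have hmem : ∀ i j k, sigmaMonomial ε i j k ∈ Submodule.span ℝ (sigmaMonomials ε) :=
    fun i j k => Submodule.subset_span ⟨i, j, k, rfl⟩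
  unfold sigmaMonomialDeriv
  refine add_mem (add_mem (sub_mem (sub_mem ?_ ?_) ?_) (hmem _ _ _)) ?_ <;>
    exact Submodule.smul_mem _ _ (hmem _ _ _)

/-- For `ε > 0`, the function `σ_ε : ℝ → ℝ` with
`σ_ε(u) = exp(−(2/√u)·arctan(ε/√u))` for `u > 0` and `σ_ε(u) = 0` for `u ≤ 0`
is `C^∞` on all of `ℝ`. -/
theorem stmt9 (ε : ℝ) (hε : 0 < ε) :
    ContDiff ℝ (⊤ : ℕ∞)
      (fun u : ℝ =>
        if 0 < u then Real.exp (-(2 / Real.sqrt u * Real.arctan (ε / Real.sqrt u)))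
        else 0) := by
  change ContDiff ℝ ∞ (sigmaEps ε)
  have hspan := exists_hasDerivAt_mem_span (s := sigmaMonomials ε) <| by
    rintro _ ⟨i, j, k, rfl⟩
    exact ⟨_, sigmaMonomialDeriv_mem_span ε i j k, hasDerivAt_sigmaMonomial hε i j k⟩
  have hσ : sigmaEps ε = sigmaMonomial ε 0 0 0 := funext fun u => by simp [sigmaMonomial]
  rw [hσ]
  exact contDiff_infty_of_forall_hasDerivAt_mem hspan (Submodule.subset_span ⟨0, 0, 0, rfl⟩)
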